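/- Let T be the tree obtained from j+1 disjoint copies of P₃ (j ≥ 0) by fixing a leaf v_e in one copy and joining v_e by an edge to a leaf of each of the other j copies. Then ψ(T) = 2j + 2. -/

import Mathlib

open Finset

variable {V : Type*} [Fintype V] [DecidableEq V]

/-- `F` is a dissociation set: it induces a subgraph of maximum degree at most 1,
i.e. every vertex of `F` has at most one neighbor in `F`. -/
def IsDissoc (G : SimpleGraph V) (F : Finset V) : Prop :=
  ∀ v ∈ F, ∀ u ∈ F, ∀ w ∈ F, G.Adj v u → G.Adj v w → u = w

open Classical in
/-- The dissociation number: maximum cardinality of a dissociation set. -/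
noncomputable def dissocNum (G : SimpleGraph V) : ℕ :=
  (Finset.univ.filter fun F : Finset V => IsDissoc G F).sup Finset.card

/-- A maximum dissociation set. -/
def IsMaxDissoc (G : SimpleGraph V) (F : Finset V) : Prop :=
  IsDissoc G F ∧ F.card = dissocNum G

open Classical in
/-- The number of maximum dissociation sets. -/
noncomputable def numMaxDissoc (G : SimpleGraph V) : ℕ :=
  (Finset.univ.filter fun F : Finset V => IsMaxDissoc G F).card

/-- Vertices of the tree built from `(j+1)P₃`: the fixed path `c 0 – c 1 – c 2`
(with leaf `v_e = c 0`) and `j` paths `p i 0 – p i 1 – p i 2`. -/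
inductive T2V (j : ℕ)
  | c : Fin 3 → T2V j
  | p : Fin j → Fin 3 → T2V j
  deriving DecidableEq, Fintype

/-- The tree obtained from `(j+1)P₃` by joining the leaf `c 0` of the fixed `P₃`
to the leaf `p i 0` of each of the other `j` copies. -/
def T2 (j : ℕ) : SimpleGraph (T2V j) :=
  SimpleGraph.fromRel fun x y =>
    (x = T2V.c 0 ∧ y = T2V.c 1) ∨ (x = T2V.c 1 ∧ y = T2V.c 2) ∨
    (∃ i, x = T2V.c 0 ∧ y = T2V.p i 0) ∨
    (∃ i, x = T2V.p i 0 ∧ y = T2V.p i 1) ∨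
    (∃ i, x = T2V.p i 1 ∧ y = T2V.p i 2)

/-!
The `j + 1` copies of `P₃` partition the vertices of `T2 j`, and a dissociation set contains at
most two vertices of any `P₃`, so `ψ ≤ 2 (j + 1)`. Conversely, the middle vertex and the far leaf
of each copy span `j + 1` edges with no edge between different copies, since every edge between
copies goes through the leaf `c 0` or a leaf `p i 0`.
-/

section Dissociation

omit [DecidableEq V]

variable {G : SimpleGraph V} {F : Finset V}

theorem IsDissoc.card_le_dissocNum (hF : IsDissoc G F) : F.card ≤ dissocNum G := by
  classical
  exact Finset.le_sup (f := Finset.card) (Finset.mem_filter.2 ⟨Finset.mem_univ _, hF⟩)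

theorem dissocNum_le {n : ℕ} (h : ∀ F, IsDissoc G F → F.card ≤ n) : dissocNum G ≤ n := by
  classical
  exact Finset.sup_le fun F hF => h F (Finset.mem_filter.1 hF).2

omit [Fintype V] in
theorem IsDissoc.card_inter_path_le_two [DecidableEq V] (hF : IsDissoc G F) {a m b : V}
    (hab : a ≠ b) (hma : G.Adj m a) (hmb : G.Adj m b) : (F ∩ {a, m, b}).card ≤ 2 := by
  by_contra! h
  have hle : ({a, m, b} : Finset V).card ≤ (F ∩ {a, m, b}).card := Finset.card_le_three.trans h
  have hsub : {a, m, b} ⊆ F := by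
    rw [← Finset.eq_of_subset_of_card_le Finset.inter_subset_right hle]
    exact Finset.inter_subset_left
  exact hab (hF m (hsub (by simp)) a (hsub (by simp)) b (hsub (by simp)) hma hmb)

omit [Fintype V] in
theorem IsDissoc.card_le_of_path_cover (hF : IsDissoc G F) {ι : Type*} [Fintype ι]
    (a m b : ι → V) (hab : ∀ k, a k ≠ b k) (hma : ∀ k, G.Adj (m k) (a k))
    (hmb : ∀ k, G.Adj (m k) (b k)) (hcover : ∀ v, ∃ k, v = a k ∨ v = m k ∨ v = b k) :
    F.card ≤ 2 * Fintype.card ι := by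
  classical
  have hF_sub : F ⊆ Finset.univ.biUnion fun k => F ∩ {a k, m k, b k} := by
    intro v hv
    obtain ⟨k, hk⟩ := hcover v
    simp only [Finset.mem_biUnion, Finset.mem_inter, Finset.mem_insert, Finset.mem_singleton]
    exact ⟨k, Finset.mem_univ _, hv, hk⟩
  calc F.card ≤ ∑ k, (F ∩ {a k, m k, b k}).card :=
        (Finset.card_le_card hF_sub).trans Finset.card_biUnion_le
    _ ≤ ∑ _k : ι, 2 :=
        Finset.sum_le_sum fun k _ => hF.card_inter_path_le_two (hab k) (hma k) (hmb k)
    _ = 2 * Fintype.card ι := by simp [mul_comm]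

end Dissociation

namespace T2V

variable {j : ℕ}

/-- Copy `none` is the fixed `P₃`; in every copy, position `0` is the leaf joined to the other
copies and position `1` is the middle vertex. -/
def ofCopy : Option (Fin j) → Fin 3 → T2V j
  | none => c
  | some i => p i

@[simp]
theorem ofCopy_inj {k k' : Option (Fin j)} {s t : Fin 3} :
    ofCopy k s = ofCopy k' t ↔ k = k' ∧ s = t := by
  cases k <;> cases k' <;> simp [ofCopy]

theorem exists_eq_ofCopy (v : T2V j) : ∃ k, v = ofCopy k 0 ∨ v = ofCopy k 1 ∨ v = ofCopy k 2 := by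
  cases v with
  | c t => exact ⟨none, by fin_cases t <;> simp [ofCopy]⟩
  | p i t => exact ⟨some i, by fin_cases t <;> simp [ofCopy]⟩

end T2V

open T2V

namespace T2

theorem adj_ofCopy_one (j : ℕ) (k : Option (Fin j)) {t : Fin 3} (ht : t ≠ 1) :
    (T2 j).Adj (ofCopy k 1) (ofCopy k t) := by
  cases k <;> fin_cases t <;> simp_all [T2, ofCopy]

theorem eq_of_adj_ofCopy_succ (j : ℕ) {k k' : Option (Fin j)} {s t : Fin 2}
    (h : (T2 j).Adj (ofCopy k s.succ) (ofCopy k' t.succ)) :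
    ofCopy k' t.succ = ofCopy k s.rev.succ := by
  cases k <;> cases k' <;> fin_cases s <;> fin_cases t <;> simp_all [T2, ofCopy]

def dissocSet (j : ℕ) : Finset (T2V j) :=
  Finset.univ.image fun x : Option (Fin j) × Fin 2 => ofCopy x.1 x.2.succ

theorem card_dissocSet (j : ℕ) : (dissocSet j).card = 2 * j + 2 := by
  rw [dissocSet, Finset.card_image_of_injective]
  · simp only [Finset.card_univ, Fintype.card_prod, Fintype.card_option, Fintype.card_fin]
    ring
  · rintro ⟨k, s⟩ ⟨k', t⟩ h
    simpa using h

theorem isDissoc_dissocSet (j : ℕ) : IsDissoc (T2 j) (dissocSet j) := by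
  simp only [IsDissoc, dissocSet, Finset.mem_image, Finset.mem_univ, true_and, Prod.exists,
    forall_exists_index]
  rintro _ k s rfl _ k' t rfl _ k'' t' rfl hu hw
  rw [eq_of_adj_ofCopy_succ j hu, eq_of_adj_ofCopy_succ j hw]

end T2

theorem dissocNum_T2_le (j : ℕ) : dissocNum (T2 j) ≤ 2 * j + 2 :=
  dissocNum_le fun _ hF => (hF.card_le_of_path_cover (fun k => ofCopy k 0) (fun k => ofCopy k 1)
    (fun k => ofCopy k 2) (fun _ => by simp)
    (fun k => T2.adj_ofCopy_one j k (by decide)) (fun k => T2.adj_ofCopy_one j k (by decide))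
    exists_eq_ofCopy).trans_eq (by simp [mul_add])

/-- The tree `T2 j` has dissociation number `2j + 2`. -/
theorem stmt_10 (j : ℕ) : dissocNum (T2 j) = 2 * j + 2 :=
  (dissocNum_T2_le j).antisymm <|
    T2.card_dissocSet j ▸ (T2.isDissoc_dissocSet j).card_le_dissocNum
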